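/- arXiv:2506.09762 — 5 statements merged into one kernel-verified Lean document; each statement's English description precedes it below -/
import Mathlib

section
/- Let (a_j)_{j≥0} be a nonnegative real sequence with a_0 = 1 and a_{j+1} ≤ b·√(a_j + ε) for all j ≥ 0, where b, ε > 0 are fixed. Then a_j ≤ b² + ε + 2^{−j} for all j ≥ 0. -/
/-- If `(a_j)` is a nonnegative sequence with `a 0 = 1` and
`a (j+1) ≤ b √(a j + ε)` for all `j`, where `b, ε > 0`, then `a j ≤ b² + ε + 2⁻ʲ` for all `j`. -/
theorem recursion_sqrt_bound (a : ℕ → ℝ) (b ε : ℝ) (hb : 0 < b) (hε : 0 < ε)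
    (ha_nonneg : ∀ j, 0 ≤ a j) (ha0 : a 0 = 1)
    (hrec : ∀ j, a (j + 1) ≤ b * Real.sqrt (a j + ε)) :
    ∀ j, a j ≤ b ^ 2 + ε + (2 : ℝ) ^ (-(j : ℝ)) := by
  intro j
  induction j with
  | zero =>
    simp only [Nat.cast_zero, neg_zero, Real.rpow_zero, ha0]
    nlinarith [sq_nonneg b]
  | succ j ih =>
    have hx : 0 ≤ a j + ε := by have := ha_nonneg j; linarith
    have hs : Real.sqrt (a j + ε) ^ 2 = a j + ε := Real.sq_sqrt hx
    have h1 : b * Real.sqrt (a j + ε) ≤ (b ^ 2 + (a j + ε)) / 2 := by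
      nlinarith [sq_nonneg (b - Real.sqrt (a j + ε))]
    have h2 : (2 : ℝ) ^ (-((j : ℝ) + 1)) = (2 : ℝ) ^ (-(j : ℝ)) / 2 := by
      rw [neg_add, Real.rpow_add (by norm_num), Real.rpow_neg_one]
      ring
    have h3 := hrec j
    push_cast
    rw [h2]
    nlinarith [ih]
end

section
/- Suppose real-valued random variables G_0, G_1, ... satisfy that the conditional distribution of G_i given G_0,...,G_{i−1} stochastically dominates the law of P_i, where P_0, P_1, ... are independent random variables. Then for every j ≥ 0, the sum G_0 + ... + G_j stochastically dominates the sum P_0 + ... + P_j. -/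
open MeasureTheory ProbabilityTheory Set

/-!
Induction on the number of summands. Let `T` and `S` be the partial sums of the `P i` and of
the `G i` before index `j`. By independence the law of `T + P j` is the convolution of the laws
of `T` and `P j`, so `ℙ(T + P j ≥ t) = ∫ ℙ(T ≥ t - y) d(law P j)(y)`. The induction hypothesis
replaces `T` by `S`, and exchanging the order of integration turns this into
`∫ ℙ(P j ≥ t - S) dℙ`. As `S` is a function of `G 0, …, G (j-1)`, conditional domination
bounds the integrand by `ℙ(G j ≥ t - S | G 0, …, G (j-1))`, which integrates to
`ℙ(S + G j ≥ t)`.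
-/

lemma measure_Ici_le_of_forall_rat {ν ρ : Measure ℝ} [IsFiniteMeasure ρ]
    (h : ∀ q : ℚ, ν (Ici (q : ℝ)) ≤ ρ (Ici (q : ℝ))) (r : ℝ) : ν (Ici r) ≤ ρ (Ici r) := by
  have hIci : Ici r = ⋂ q : {q : ℚ // (q : ℝ) < r}, Ici (q : ℝ) := by
    ext x
    simp only [mem_Ici, mem_iInter, Subtype.forall]
    exact ⟨fun hx q hq => hq.le.trans hx, fun hx => le_of_forall_rat_lt_imp_le hx⟩
  obtain ⟨q₀, hq₀⟩ := exists_rat_lt r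
  have hanti : Antitone fun q : {q : ℚ // (q : ℝ) < r} => Ici (q : ℝ) :=
    fun a b hab => Ici_subset_Ici.mpr (by exact_mod_cast hab)
  calc ν (Ici r) ≤ ⨅ q : {q : ℚ // (q : ℝ) < r}, ρ (Ici (q : ℝ)) :=
        le_iInf fun q => (measure_mono (Ici_subset_Ici.mpr q.2.le)).trans (h q)
    _ = ρ (Ici r) := by
      rw [hIci, hanti.directed_ge.measure_iInter (fun _ => measurableSet_Ici.nullMeasurableSet)
        ⟨⟨q₀, hq₀⟩, measure_ne_top _ _⟩]

lemma conv_Ici_eq_lintegral (a b : Measure ℝ) [SFinite b] (t : ℝ) :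
    (a ∗ b) (Ici t) = ∫⁻ x, b (Ici (t - x)) ∂a := by
  rw [Measure.conv, Measure.map_apply measurable_add measurableSet_Ici,
    Measure.prod_apply (measurable_add measurableSet_Ici)]
  refine lintegral_congr fun x => congr_arg b ?_
  ext y
  simp only [mem_preimage, mem_Ici, sub_le_iff_le_add']

lemma measure_le_add_eq_lintegral_condDistrib {Ω β : Type*} [MeasurableSpace Ω]
    [MeasurableSpace β] {μ : Measure Ω} [IsFiniteMeasure μ] {V : Ω → β} {X : Ω → ℝ}
    {f : β → ℝ} (hV : Measurable V) (hX : Measurable X) (hf : Measurable f) (t : ℝ) :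
    μ {ω | t ≤ f (V ω) + X ω} = ∫⁻ ω, condDistrib X V μ (V ω) (Ici (t - f (V ω))) ∂μ := by
  have hA : MeasurableSet {q : β × ℝ | t ≤ f q.1 + q.2} :=
    measurableSet_le measurable_const ((hf.comp measurable_fst).add measurable_snd)
  calc μ {ω | t ≤ f (V ω) + X ω} = μ.map (fun ω => (V ω, X ω)) {q | t ≤ f q.1 + q.2} := by
        rw [Measure.map_apply (hV.prodMk hX) hA]; rfl
    _ = ∫⁻ b, condDistrib X V μ b (Prod.mk b ⁻¹' {q | t ≤ f q.1 + q.2}) ∂(μ.map V) := by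
        rw [← compProd_map_condDistrib hX.aemeasurable, Measure.compProd_apply hA]
    _ = ∫⁻ ω, condDistrib X V μ (V ω) (Ici (t - f (V ω))) ∂μ := by
        rw [lintegral_map (Kernel.measurable_kernel_prodMk_left hA) hV]
        refine lintegral_congr fun ω => congr_arg (condDistrib X V μ (V ω)) ?_
        ext x
        simp only [mem_preimage, mem_Ici, sub_le_iff_le_add', mem_ofPred_eq]

lemma ae_map_Ici_le_condDistrib {Ω β : Type*} [MeasurableSpace Ω] [MeasurableSpace β]
    {μ : Measure Ω} [IsFiniteMeasure μ] {V : Ω → β} {X Y : Ω → ℝ} (hV : Measurable V)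
    (hX : Measurable X) (hY : Measurable Y)
    (hdom : ∀ t : ℝ, ∀ᵐ ω ∂μ, (μ {ω' | Y ω' ≥ t}).toReal
      ≤ (μ⟦{ω' | X ω' ≥ t} | MeasurableSpace.comap V inferInstance⟧) ω) :
    ∀ᵐ ω ∂μ, ∀ r, μ.map Y (Ici r) ≤ condDistrib X V μ (V ω) (Ici r) := by
  -- The exceptional null set depends on the threshold, so pass through countably many of them.
  have hrat : ∀ᵐ ω ∂μ, ∀ q : ℚ, μ.map Y (Ici (q : ℝ)) ≤ condDistrib X V μ (V ω) (Ici (q : ℝ)) := by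
    refine ae_all_iff.mpr fun q => ?_
    filter_upwards [hdom q, condDistrib_ae_eq_condExp hV hX (measurableSet_Ici (a := (q : ℝ)))]
      with ω hle heq
    rw [measureReal_def] at heq
    rw [Measure.map_apply hY measurableSet_Ici, ← ENNReal.toReal_le_toReal (measure_ne_top _ _)
      (measure_ne_top _ _), heq]
    exact hle
  filter_upwards [hrat] with ω hω
  exact measure_Ici_le_of_forall_rat hω

lemma measure_le_add_le_of_ae_map_le_condDistrib {Ω β : Type*} [MeasurableSpace Ω]
    [MeasurableSpace β] {μ : Measure Ω} [IsFiniteMeasure μ] {T Y X : Ω → ℝ} {V : Ω → β}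
    {f : β → ℝ} (hT : Measurable T) (hY : Measurable Y) (hX : Measurable X) (hV : Measurable V)
    (hf : Measurable f) (hTY : IndepFun T Y μ)
    (hTS : ∀ t, μ {ω | t ≤ T ω} ≤ μ {ω | t ≤ f (V ω)})
    (hdom : ∀ᵐ ω ∂μ, ∀ r, μ.map Y (Ici r) ≤ condDistrib X V μ (V ω) (Ici r)) (t : ℝ) :
    μ {ω | t ≤ T ω + Y ω} ≤ μ {ω | t ≤ f (V ω) + X ω} := by
  have hS : Measurable (f ∘ V) := hf.comp hV
  have hlaw : ∀ {Z : Ω → ℝ}, Measurable Z → ∀ s, μ.map Z (Ici s) = μ {ω | s ≤ Z ω} :=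
    fun hZ s => Measure.map_apply hZ measurableSet_Ici
  calc μ {ω | t ≤ T ω + Y ω} = (μ.map T ∗ μ.map Y) (Ici t) := by
        rw [← hTY.map_add_eq_map_conv_map hT hY, hlaw (hT.add hY)]; rfl
    _ = ∫⁻ y, μ.map T (Ici (t - y)) ∂μ.map Y := by
        rw [Measure.conv_comm, conv_Ici_eq_lintegral]
    _ ≤ ∫⁻ y, μ.map (f ∘ V) (Ici (t - y)) ∂μ.map Y :=
        lintegral_mono fun y => by rw [hlaw hT, hlaw hS]; exact hTS _
    _ = ∫⁻ s, μ.map Y (Ici (t - s)) ∂μ.map (f ∘ V) := by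
        rw [← conv_Ici_eq_lintegral, Measure.conv_comm, conv_Ici_eq_lintegral]
    _ = ∫⁻ ω, μ.map Y (Ici (t - f (V ω))) ∂μ := by
        refine lintegral_map (Monotone.measurable fun s s' hss' => ?_) hS
        exact measure_mono (Ici_subset_Ici.mpr (by linarith))
    _ ≤ ∫⁻ ω, condDistrib X V μ (V ω) (Ici (t - f (V ω))) ∂μ :=
        lintegral_mono_ae (hdom.mono fun ω hω => hω _)
    _ = μ {ω | t ≤ f (V ω) + X ω} := (measure_le_add_eq_lintegral_condDistrib hV hX hf t).symm

/-- If real random variables `G 0, G 1, …` are such that the conditional law of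
`G i` given `G 0, …, G (i-1)` stochastically dominates the law of `P i`, where the `P i` are
mutually independent, then `G 0 + ⋯ + G j` stochastically dominates `P 0 + ⋯ + P j` for every
`j`. -/
theorem sum_stoch_dom_of_cond_stoch_dom
    {Ω : Type*} [MeasureSpace Ω] [IsProbabilityMeasure (ℙ : Measure Ω)]
    (G : ℕ → Ω → ℝ) (P : ℕ → Ω → ℝ)
    (hG : ∀ i, Measurable (G i)) (hP : ∀ i, Measurable (P i))
    (hPindep : iIndepFun P ℙ)
    (hdom : ∀ i : ℕ, ∀ t : ℝ, ∀ᵐ ω ∂(ℙ : Measure Ω),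
      ((ℙ : Measure Ω) {ω' | P i ω' ≥ t}).toReal
        ≤ ((ℙ : Measure Ω)⟦{ω' | G i ω' ≥ t} |
            MeasurableSpace.comap (fun ω' (k : Fin i) => G k ω') inferInstance⟧) ω) :
    ∀ j : ℕ, ∀ t : ℝ,
      (ℙ : Measure Ω) {ω | t ≤ ∑ i ∈ Finset.range (j + 1), P i ω}
        ≤ (ℙ : Measure Ω) {ω | t ≤ ∑ i ∈ Finset.range (j + 1), G i ω} := by
  suffices h : ∀ j t, (ℙ : Measure Ω) {ω | t ≤ ∑ i ∈ Finset.range j, P i ω}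
      ≤ (ℙ : Measure Ω) {ω | t ≤ ∑ i ∈ Finset.range j, G i ω} from fun j => h (j + 1)
  intro j
  induction j with
  | zero => simp
  | succ j ih =>
    have hV : Measurable fun ω (k : Fin j) => G k ω := measurable_pi_lambda _ fun k => hG k
    have hGFin : ∀ ω, ∑ i ∈ Finset.range j, G i ω = ∑ k : Fin j, G k ω :=
      fun ω => (Fin.sum_univ_eq_sum_range (G · ω) j).symm
    have hindep : IndepFun (fun ω => ∑ i ∈ Finset.range j, P i ω) (P j) ℙ := by
      simpa only [Finset.sum_fn] using hPindep.indepFun_sum_range_succ hP j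
    simp only [Finset.sum_range_succ, hGFin] at ih ⊢
    exact measure_le_add_le_of_ae_map_le_condDistrib (Finset.measurable_sum _ fun i _ => hP i)
      (hP j) (hG j) hV (by fun_prop) hindep ih
      (ae_map_Ici_le_condDistrib hV (hG j) (hP j) (hdom j))
end

section
/- Let X̃ ~ χ²_d (chi-squared with d degrees of freedom) and set X = X̃/d. Let Y be a {0,1}-valued random variable on the same probability space. If P(X > t) ≤ exp(−td/20) for all t ≥ 2, then E[XY] ≤ 2(P(Y = 1) + 11·exp(−d/10)). -/
/-!
On `{Y = 1}` split `X ≤ 2 + (X - 2)⁺`, so `E[XY] ≤ 2 P(Y = 1) + E[(X - 2)⁺]`. By the layer-cake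
formula `E[(X - 2)⁺] = ∫₀^∞ P(X > t + 2) dt ≤ ∫₀^∞ e^{-(t + 2)d/20} dt = (20/d) e^{-d/10}`,
which is at most `20 e^{-d/10}` once `d ≥ 1`.
-/

open MeasureTheory ProbabilityTheory Real Set

section

variable {Ω : Type*} [MeasurableSpace Ω] {μ : Measure Ω}

lemma integral_eq_measureReal_of_ae_zero_or_one {Y : Ω → ℝ} (hY : Measurable Y)
    (hY01 : ∀ᵐ ω ∂μ, Y ω = 0 ∨ Y ω = 1) :
    ∫ ω, Y ω ∂μ = μ.real {ω | Y ω = 1} := by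
  have hY_eq : Y =ᵐ[μ] {ω | Y ω = 1}.indicator 1 := by
    filter_upwards [hY01] with ω h
    rcases h with h | h <;> simp [h]
  rw [integral_congr_ae hY_eq]
  exact integral_indicator_one (hY (measurableSet_singleton 1))

lemma integral_mul_le_of_ae_zero_or_one [IsFiniteMeasure μ] {X Y : Ω → ℝ}
    (hX : Integrable X μ) (hY : Measurable Y) (hY01 : ∀ᵐ ω ∂μ, Y ω = 0 ∨ Y ω = 1) (c : ℝ) :
    ∫ ω, X ω * Y ω ∂μ ≤ c * μ.real {ω | Y ω = 1} + ∫ ω, max (X ω - c) 0 ∂μ := by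
  have hY_int : Integrable Y μ := by
    refine (integrable_const (1 : ℝ)).mono' hY.aestronglyMeasurable ?_
    filter_upwards [hY01] with ω h
    rcases h with h | h <;> simp [h]
  have hXY_int : Integrable (fun ω => X ω * Y ω) μ := by
    refine hX.abs.mono' (hX.aestronglyMeasurable.mul hY.aestronglyMeasurable) ?_
    filter_upwards [hY01] with ω h
    rcases h with h | h <;> simp [h]
  have hpos_int : Integrable (fun ω => max (X ω - c) 0) μ :=
    (hX.sub (integrable_const c)).pos_part
  have hpointwise : ∀ᵐ ω ∂μ, X ω * Y ω ≤ c * Y ω + max (X ω - c) 0 := by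
    filter_upwards [hY01] with ω h
    rcases h with h | h
    · simp [h]
    · have := le_max_left (X ω - c) 0
      simp only [h, mul_one]
      linarith
  calc ∫ ω, X ω * Y ω ∂μ ≤ ∫ ω, (c * Y ω + max (X ω - c) 0) ∂μ :=
        integral_mono_ae hXY_int ((hY_int.const_mul c).add hpos_int) hpointwise
    _ = c * μ.real {ω | Y ω = 1} + ∫ ω, max (X ω - c) 0 ∂μ := by
        rw [integral_add (hY_int.const_mul c) hpos_int, integral_const_mul,
          integral_eq_measureReal_of_ae_zero_or_one hY hY01]

lemma integral_max_sub_le_of_tail_le_exp {X : Ω → ℝ} (hX : AEMeasurable X μ) {c l : ℝ}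
    (hl : 0 < l) (htail : ∀ t, c ≤ t → μ {ω | t < X ω} ≤ ENNReal.ofReal (exp (-(l * t)))) :
    ∫ ω, max (X ω - c) 0 ∂μ ≤ exp (-(l * c)) / l := by
  set f : Ω → ℝ := fun ω => max (X ω - c) 0
  have hf_nonneg : 0 ≤ᵐ[μ] f := .of_forall fun ω => le_max_right _ _
  have hf_tail : ∀ t ∈ Ioi (0 : ℝ),
      μ {ω | t < f ω} ≤ ENNReal.ofReal (exp (-(l * c)) * exp (-(l * t))) := by
    intro t (ht : 0 < t)
    have hset : {ω | t < f ω} = {ω | t + c < X ω} := by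
      ext ω
      simp only [f, mem_ofPred_eq, lt_max_iff, ht.not_gt, or_false, lt_sub_iff_add_lt]
    rw [hset, ← exp_add]
    convert htail (t + c) (by linarith) using 4
    ring
  have hexp_int : IntegrableOn (fun t => exp (-(l * c)) * exp (-(l * t))) (Ioi 0) := by
    have := (integrableOn_exp_mul_Ioi (neg_lt_zero.2 hl) 0).const_mul (exp (-(l * c)))
    simp only [neg_mul] at this
    exact this
  have hexp_integral : ∫ t in Ioi (0 : ℝ), exp (-(l * c)) * exp (-(l * t)) = exp (-(l * c)) / l := by
    rw [integral_const_mul]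
    simp only [← neg_mul]
    rw [integral_exp_mul_Ioi (neg_lt_zero.2 hl)]
    field_simp
    simp
  rw [integral_eq_lintegral_of_nonneg_ae hf_nonneg (by fun_prop), ← hexp_integral]
  refine ENNReal.toReal_le_of_le_ofReal (by positivity) ?_
  calc ∫⁻ ω, ENNReal.ofReal (f ω) ∂μ = ∫⁻ t in Ioi 0, μ {ω | t < f ω} :=
        lintegral_eq_lintegral_meas_lt μ hf_nonneg (by fun_prop)
    _ ≤ ∫⁻ t in Ioi 0, ENNReal.ofReal (exp (-(l * c)) * exp (-(l * t))) :=
        setLIntegral_mono' measurableSet_Ioi hf_tail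
    _ = _ := (ofReal_integral_eq_lintegral_ofReal hexp_int
        (.of_forall fun t => by positivity)).symm

end

theorem chi_sq_times_indicator_bound_general
    {Ω : Type*} [MeasureSpace Ω] [IsProbabilityMeasure (ℙ : Measure Ω)]
    (d : ℕ) (hd : 1 ≤ d)
    (X : Ω → ℝ)
    (Y : Ω → ℝ) (hY : Measurable Y) (hY01 : ∀ᵐ ω ∂(ℙ : Measure Ω), Y ω = 0 ∨ Y ω = 1)
    (hXint : Integrable X ℙ)
    (htail : ∀ t : ℝ, 2 ≤ t → (ℙ : Measure Ω) {ω | X ω > t} ≤ ENNReal.ofReal (Real.exp (-(t * d / 20)))) :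
    ∫ ω, X ω * Y ω ∂ℙ
      ≤ 2 * (((ℙ : Measure Ω) {ω | Y ω = 1}).toReal + 11 * Real.exp (-(d : ℝ) / 10)) := by
  have hd' : (1 : ℝ) ≤ d := by exact_mod_cast hd
  have hexcess : ∫ ω, max (X ω - 2) 0 ∂ℙ ≤ exp (-(d / 20 * 2)) / (d / 20) :=
    integral_max_sub_le_of_tail_le_exp hXint.aemeasurable (by positivity) fun t ht => by
      convert htail t ht using 4
      ring
  have hconst : exp (-(d / 20 * 2)) / (d / 20) ≤ 20 * exp (-(d : ℝ) / 10) := by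
    rw [div_le_iff₀ (by positivity), show -((d : ℝ) / 20 * 2) = -d / 10 by ring]
    nlinarith [exp_pos (-(d : ℝ) / 10)]
  have hsplit := integral_mul_le_of_ae_zero_or_one hXint hY hY01 2
  rw [← measureReal_def]
  linarith [exp_pos (-(d : ℝ) / 10)]

/-- Let `X̃ ~ χ²_d` (chi-squared, i.e. `Gamma(d/2, rate 1/2)`), `X = X̃/d`, and
let `Y` be `{0,1}`-valued on the same space. If `P(X > t) ≤ exp(−td/20)` for all `t ≥ 2`, then
`E[XY] ≤ 2(P(Y = 1) + 11 exp(−d/10))`. -/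
theorem chi_sq_times_indicator_bound
    {Ω : Type*} [MeasureSpace Ω] [IsProbabilityMeasure (ℙ : Measure Ω)]
    (d : ℕ) (hd : 1 ≤ d)
    (Xt : Ω → ℝ) (hXt : Measurable Xt)
    (hXtlaw : Measure.map Xt ℙ = gammaMeasure ((d : ℝ) / 2) (1 / 2))
    (X : Ω → ℝ) (hX : X = fun ω => Xt ω / d)
    (Y : Ω → ℝ) (hY : Measurable Y) (hY01 : ∀ᵐ ω ∂(ℙ : Measure Ω), Y ω = 0 ∨ Y ω = 1)
    (hXint : Integrable X ℙ)
    (htail : ∀ t : ℝ, 2 ≤ t → (ℙ : Measure Ω) {ω | X ω > t} ≤ ENNReal.ofReal (Real.exp (-(t * d / 20)))) :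
    ∫ ω, X ω * Y ω ∂ℙ
      ≤ 2 * (((ℙ : Measure Ω) {ω | Y ω = 1}).toReal + 11 * Real.exp (-(d : ℝ) / 10)) :=
  chi_sq_times_indicator_bound_general d hd X Y hY hY01 hXint htail
end

section
/- Let W be an i×i positive semidefinite random matrix whose maximum eigenvalue λ_max(W) satisfies P(λ_max(W) > (1 + √(i/d) + t)²) ≤ exp(−t²d/2) for all t ≥ 0 and i ≤ d, and let Y be a random vector in ℝ^i on the same probability space with ‖Y‖² ≤ i almost surely. Then E[Yᵀ W Y] ≤ 15·E[‖Y‖²] + 25·i·exp(−3d/2). -/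
set_option maxHeartbeats 1000000


open MeasureTheory ProbabilityTheory

/-- Let `W` be a random `i × i` positive semidefinite matrix whose largest
eigenvalue `lmax` satisfies the Wishart tail bound
`P(lmax > (1 + √(i/d) + t)²) ≤ exp(−t²d/2)` for all `t ≥ 0` (with `i ≤ d`), and let `Y` be a
random vector in `ℝ^i` with `‖Y‖² ≤ i` almost surely. Then
`E[Yᵀ W Y] ≤ 15 E[‖Y‖²] + 25 i exp(−3d/2)`. -/
theorem quadratic_form_wishart_bound
    {Ω : Type*} [MeasureSpace Ω] [IsProbabilityMeasure (ℙ : Measure Ω)]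
    (i d : ℕ) (hi : 0 < i) (hid : i ≤ d)
    (W : Ω → (Fin i → Fin i → ℝ)) (lmax : Ω → ℝ) (Y : Ω → EuclideanSpace ℝ (Fin i))
    (hWmeas : ∀ k l, Measurable fun ω => W ω k l)
    (hlmaxmeas : Measurable lmax)
    (hYmeas : ∀ k, Measurable fun ω => Y ω k)
    -- `W` is positive semidefinite and `lmax` bounds its quadratic form (max eigenvalue):
    (hpsd : ∀ᵐ ω ∂(ℙ : Measure Ω), ∀ v : Fin i → ℝ,
      0 ≤ ∑ k, ∑ l, v k * W ω k l * v l)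
    (hlmax : ∀ᵐ ω ∂(ℙ : Measure Ω), ∀ v : Fin i → ℝ,
      ∑ k, ∑ l, v k * W ω k l * v l ≤ lmax ω * ∑ k, v k ^ 2)
    (htail : ∀ t : ℝ, 0 ≤ t →
      (ℙ : Measure Ω) {ω | lmax ω > (1 + Real.sqrt ((i : ℝ) / d) + t) ^ 2}
        ≤ ENNReal.ofReal (Real.exp (-(t ^ 2 * d / 2))))
    (hYbound : ∀ᵐ ω ∂(ℙ : Measure Ω), ‖Y ω‖ ^ 2 ≤ (i : ℝ))
    (hquadint : Integrable (fun ω => ∑ k, ∑ l, Y ω k * W ω k l * Y ω l) ℙ)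
    (hYint : Integrable (fun ω => ‖Y ω‖ ^ 2) ℙ) :
    ∫ ω, ∑ k, ∑ l, Y ω k * W ω k l * Y ω l ∂ℙ
      ≤ 15 * ∫ ω, ‖Y ω‖ ^ 2 ∂ℙ + 25 * i * Real.exp (-(3 * (d : ℝ) / 2)) := by
  classical
  set μ : Measure Ω := ℙ with hμdef
  set f : Ω → ℝ := fun ω => ∑ k, ∑ l, Y ω k * W ω k l * Y ω l with hfdef
  set B : Set Ω := {ω | 15 < lmax ω} with hBdef
  have hBmeas : MeasurableSet B := measurableSet_lt measurable_const hlmaxmeas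
  have hd0 : (0:ℝ) < d := by
    have : 0 < d := lt_of_lt_of_le hi hid
    exact_mod_cast this
  have hd1 : (1:ℝ) ≤ d := by
    have : 1 ≤ d := le_trans hi hid
    exact_mod_cast this
  have hi0 : (0:ℝ) ≤ i := by positivity
  -- squared norm as a sum
  have hnormsq : ∀ ω, ‖Y ω‖ ^ 2 = ∑ k, Y ω k ^ 2 := by
    intro ω
    rw [EuclideanSpace.norm_eq, Real.sq_sqrt (by positivity)]
    simp [Real.norm_eq_abs, sq_abs]
  have hsqrtid : Real.sqrt ((i:ℝ)/d) ≤ 1 := by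
    rw [Real.sqrt_le_one]
    rw [div_le_one hd0]
    exact_mod_cast hid
  have hsqrtid0 : 0 ≤ Real.sqrt ((i:ℝ)/d) := Real.sqrt_nonneg _
  -- tail bound for the event B = {lmax > 15}
  have hBtail : μ B ≤ ENNReal.ofReal (Real.exp (-(3 * (d:ℝ) / 2))) := by
    have h3 : (0:ℝ) ≤ Real.sqrt 3 := Real.sqrt_nonneg _
    have h37 : Real.sqrt 3 ≤ 7/4 := by
      rw [show (7:ℝ)/4 = Real.sqrt ((7/4)^2) by rw [Real.sqrt_sq (by norm_num : (0:ℝ) ≤ 7/4)]]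
      exact Real.sqrt_le_sqrt (by norm_num)
    have hsub : B ⊆ {ω | lmax ω > (1 + Real.sqrt ((i:ℝ)/d) + Real.sqrt 3) ^ 2} := by
      intro ω hω
      have hbase : 1 + Real.sqrt ((i:ℝ)/d) + Real.sqrt 3 ≤ 15/4 := by linarith
      have hsq : (1 + Real.sqrt ((i:ℝ)/d) + Real.sqrt 3) ^ 2 ≤ (15/4:ℝ)^2 := by
        apply pow_le_pow_left₀ (by positivity) hbase
      have : (15/4:ℝ)^2 ≤ 15 := by norm_num
      exact lt_of_le_of_lt (le_trans hsq this) hω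
    calc μ B ≤ μ {ω | lmax ω > (1 + Real.sqrt ((i:ℝ)/d) + Real.sqrt 3) ^ 2} :=
          measure_mono hsub
      _ ≤ ENNReal.ofReal (Real.exp (-(Real.sqrt 3 ^ 2 * d / 2))) := htail _ h3
      _ = ENNReal.ofReal (Real.exp (-(3 * (d:ℝ) / 2))) := by
          rw [Real.sq_sqrt (by norm_num : (0:ℝ) ≤ 3)]
  -- tail bound for t ≥ 15
  have hTail15 : ∀ t : ℝ, 15 ≤ t →
      μ {ω | t < lmax ω} ≤ ENNReal.ofReal (Real.exp (-((d:ℝ)/10) * t)) := by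
    intro t ht
    have ht0 : (0:ℝ) ≤ t := by linarith
    have hu : 19/5 ≤ Real.sqrt t := by
      rw [Real.le_sqrt (by norm_num) ht0]; nlinarith
    have hu2 : Real.sqrt t ^ 2 = t := Real.sq_sqrt ht0
    set s : ℝ := Real.sqrt t - 2 with hsdef
    have hs0 : 0 ≤ s := by rw [hsdef]; linarith
    have hsub : {ω | t < lmax ω} ⊆
        {ω | lmax ω > (1 + Real.sqrt ((i:ℝ)/d) + s) ^ 2} := by
      intro ω hω
      have hbase : 1 + Real.sqrt ((i:ℝ)/d) + s ≤ 2 + s := by linarith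
      have hsq : (1 + Real.sqrt ((i:ℝ)/d) + s) ^ 2 ≤ (2 + s)^2 :=
        pow_le_pow_left₀ (by positivity) hbase 2
      have h2s : (2 + s)^2 = t := by rw [hsdef]; nlinarith [hu2]
      have hle : (1 + Real.sqrt ((i:ℝ)/d) + s) ^ 2 ≤ t := by rw [← h2s]; exact hsq
      exact lt_of_le_of_lt hle hω
    refine le_trans (le_trans (measure_mono hsub) (htail s hs0)) ?_
    apply ENNReal.ofReal_le_ofReal
    apply Real.exp_le_exp.mpr
    have hss : t/5 ≤ s^2 := by
      rw [hsdef]; nlinarith [sq_nonneg (Real.sqrt t - 19/5), hu, hu2]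
    nlinarith [hd0, mul_le_mul_of_nonneg_right hss (le_of_lt hd0)]
  -- a.e. nonnegativity of f
  have hfnn : ∀ᵐ ω ∂μ, 0 ≤ f ω := hpsd.mono fun ω h => h (Y ω)
  -- key a.e. pointwise bound
  have hkey : ∀ᵐ ω ∂μ, f ω ≤ 15 * ‖Y ω‖ ^ 2 + B.indicator f ω := by
    filter_upwards [hpsd, hlmax] with ω h0 h1
    by_cases hω : ω ∈ B
    · rw [Set.indicator_of_mem hω]
      have : (0:ℝ) ≤ 15 * ‖Y ω‖ ^ 2 := by positivity
      linarith
    · rw [Set.indicator_of_notMem hω]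
      have hl15 : lmax ω ≤ 15 := not_lt.mp hω
      have h2 : f ω ≤ lmax ω * ‖Y ω‖ ^ 2 := by
        rw [hnormsq]; exact h1 (Y ω)
      have h3 : lmax ω * ‖Y ω‖ ^ 2 ≤ 15 * ‖Y ω‖ ^ 2 :=
        mul_le_mul_of_nonneg_right hl15 (by positivity)
      linarith
  have hindint : Integrable (B.indicator f) μ := hquadint.indicator hBmeas
  -- bound the integral of the indicator part
  have hindnn : 0 ≤ᵐ[μ] B.indicator f := by
    filter_upwards [hfnn] with ω h0
    simp only [Pi.zero_apply]
    by_cases hω : ω ∈ B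
    · rw [Set.indicator_of_mem hω]; exact h0
    · rw [Set.indicator_of_notMem hω]
  -- real auxiliary function g = indicator of B times lmax
  set g : Ω → ℝ := B.indicator lmax with hgdef
  have hgmeas : Measurable g := hlmaxmeas.indicator hBmeas
  have hgnn : ∀ ω, 0 ≤ g ω := by
    intro ω
    by_cases hω : ω ∈ B
    · rw [hgdef, Set.indicator_of_mem hω]
      exact le_of_lt (lt_trans (by norm_num) hω)
    · rw [hgdef, Set.indicator_of_notMem hω]
  set E3 : ℝ := Real.exp (-(3 * (d:ℝ) / 2)) with hE3def
  have hE30 : 0 < E3 := Real.exp_pos _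
  -- lintegral bound for g
  have hglint : ∫⁻ ω, ENNReal.ofReal (g ω) ∂μ ≤ ENNReal.ofReal (25 * E3) := by
    rw [lintegral_eq_lintegral_meas_lt μ (Filter.Eventually.of_forall hgnn)
      hgmeas.aemeasurable]
    rw [← Set.Ioc_union_Ioi_eq_Ioi (by norm_num : (0:ℝ) ≤ 15),
      lintegral_union measurableSet_Ioi (Set.Ioc_disjoint_Ioi le_rfl)]
    have h1 : ∫⁻ t in Set.Ioc (0:ℝ) 15, μ {a | t < g a} ≤ ENNReal.ofReal (15 * E3) := by
      have hb : ∀ t ∈ Set.Ioc (0:ℝ) 15, μ {a | t < g a} ≤ ENNReal.ofReal E3 := by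
        intro t ht
        refine le_trans (measure_mono ?_) hBtail
        intro a ha
        rw [Set.mem_setOf_eq, hgdef] at ha
        by_contra hc
        rw [Set.indicator_of_notMem hc] at ha
        exact absurd ha (not_lt.mpr (le_of_lt ht.1))
      calc ∫⁻ t in Set.Ioc (0:ℝ) 15, μ {a | t < g a}
          ≤ ∫⁻ _ in Set.Ioc (0:ℝ) 15, ENNReal.ofReal E3 :=
            setLIntegral_mono' measurableSet_Ioc hb
        _ = ENNReal.ofReal E3 * volume (Set.Ioc (0:ℝ) 15) := setLIntegral_const _ _
        _ = ENNReal.ofReal (15 * E3) := by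
            rw [Real.volume_Ioc, ← ENNReal.ofReal_mul (le_of_lt hE30)]
            norm_num [mul_comm]
    have h2 : ∫⁻ t in Set.Ioi (15:ℝ), μ {a | t < g a} ≤ ENNReal.ofReal (10 * E3) := by
      have hb : ∀ t ∈ Set.Ioi (15:ℝ), μ {a | t < g a}
          ≤ ENNReal.ofReal (Real.exp (-((d:ℝ)/10) * t)) := by
        intro t ht
        refine le_trans (measure_mono ?_) (hTail15 t (le_of_lt ht))
        intro a ha
        rw [Set.mem_setOf_eq, hgdef] at ha
        rw [Set.mem_setOf_eq]
        by_cases hc : a ∈ B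
        · rw [Set.indicator_of_mem hc] at ha; exact ha
        · rw [Set.indicator_of_notMem hc] at ha
          exact absurd ha (not_lt.mpr (by linarith [ht.out]))
      calc ∫⁻ t in Set.Ioi (15:ℝ), μ {a | t < g a}
          ≤ ∫⁻ t in Set.Ioi (15:ℝ), ENNReal.ofReal (Real.exp (-((d:ℝ)/10) * t)) :=
            setLIntegral_mono' measurableSet_Ioi hb
        _ = ENNReal.ofReal (∫ t in Set.Ioi (15:ℝ), Real.exp (-((d:ℝ)/10) * t)) :=
            (ofReal_integral_eq_lintegral_ofReal
              (exp_neg_integrableOn_Ioi 15 (by positivity : (0:ℝ) < (d:ℝ)/10))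
              (Filter.Eventually.of_forall fun t => le_of_lt (Real.exp_pos _))).symm
        _ ≤ ENNReal.ofReal (10 * E3) := by
            apply ENNReal.ofReal_le_ofReal
            have hcv : ∫ t in Set.Ioi (15:ℝ), Real.exp (-((d:ℝ)/10) * t)
                = ∫ t in Set.Ioi (15:ℝ), Real.exp (-((d:ℝ)/10 * t)) := by
              congr 1; ext t; rw [neg_mul]
            rw [hcv, integral_comp_mul_left_Ioi (fun y => Real.exp (-y)) 15
              (by positivity : (0:ℝ) < (d:ℝ)/10), integral_exp_neg_Ioi, smul_eq_mul]
            have h1015 : -((d:ℝ)/10*15) = -(3 * (d:ℝ)/2) := by ring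
            rw [h1015, ← hE3def]
            have hinv : ((d:ℝ)/10)⁻¹ ≤ 10 := by
              rw [inv_div, div_le_iff₀ hd0]
              nlinarith
            exact mul_le_mul_of_nonneg_right hinv (le_of_lt hE30)
    calc _ ≤ ENNReal.ofReal (15 * E3) + ENNReal.ofReal (10 * E3) := add_le_add h1 h2
      _ = ENNReal.ofReal (25 * E3) := by
          rw [← ENNReal.ofReal_add (by positivity) (by positivity)]
          congr 1; ring
  -- bound ∫ indicator f
  have hindbound : ∫ ω, B.indicator f ω ∂μ ≤ 25 * i * E3 := by
    rw [integral_eq_lintegral_of_nonneg_ae hindnn hindint.1]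
    apply ENNReal.toReal_le_of_le_ofReal (by positivity)
    have hptb : ∀ᵐ ω ∂μ, ENNReal.ofReal (B.indicator f ω)
        ≤ ENNReal.ofReal ((i:ℝ)) * ENNReal.ofReal (g ω) := by
      filter_upwards [hlmax, hYbound, hfnn] with ω h1 h2 h0
      rw [← ENNReal.ofReal_mul hi0]
      apply ENNReal.ofReal_le_ofReal
      by_cases hω : ω ∈ B
      · rw [Set.indicator_of_mem hω, hgdef, Set.indicator_of_mem hω]
        have hl0 : (0:ℝ) ≤ lmax ω := le_of_lt (lt_trans (by norm_num) hω)
        calc f ω ≤ lmax ω * ‖Y ω‖ ^ 2 := by rw [hnormsq]; exact h1 (Y ω)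
          _ ≤ lmax ω * i := mul_le_mul_of_nonneg_left h2 hl0
          _ = i * lmax ω := mul_comm _ _
      · rw [Set.indicator_of_notMem hω, hgdef, Set.indicator_of_notMem hω, mul_zero]
    calc ∫⁻ ω, ENNReal.ofReal (B.indicator f ω) ∂μ
        ≤ ∫⁻ ω, ENNReal.ofReal ((i:ℝ)) * ENNReal.ofReal (g ω) ∂μ := lintegral_mono_ae hptb
      _ = ENNReal.ofReal ((i:ℝ)) * ∫⁻ ω, ENNReal.ofReal (g ω) ∂μ :=
          lintegral_const_mul _ (ENNReal.measurable_ofReal.comp hgmeas)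
      _ ≤ ENNReal.ofReal ((i:ℝ)) * ENNReal.ofReal (25 * E3) := by
          exact mul_le_mul_right hglint _
      _ = ENNReal.ofReal (25 * i * E3) := by
          rw [← ENNReal.ofReal_mul hi0]; ring_nf
  -- put it together
  have hmain : ∫ ω, f ω ∂μ ≤ ∫ ω, (15 * ‖Y ω‖ ^ 2 + B.indicator f ω) ∂μ :=
    integral_mono_ae hquadint ((hYint.const_mul 15).add hindint) hkey
  rw [integral_add (hYint.const_mul 15) hindint, integral_const_mul] at hmain
  calc ∫ ω, f ω ∂μ ≤ 15 * ∫ ω, ‖Y ω‖ ^ 2 ∂μ + ∫ ω, B.indicator f ω ∂μ := hmain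
    _ ≤ 15 * ∫ ω, ‖Y ω‖ ^ 2 ∂μ + 25 * i * E3 := by linarith [hindbound]
end

section
/- Consider a deterministic-scan Metropolis-within-Gibbs chain targeting the isotropic Gaussian density π(x) ∝ exp(−‖x − μ‖²/(2σ²)) on ℝ^d, with updates along an orthonormal basis o_0, ..., o_{d−1}. Fix proposal increments z_0,...,z_{K−1} ∈ ℝ (K ≤ d) and uniforms u_0,...,u_{K−1} ∈ [0,1]. Let x_{i+1} = x_i + B(x_i, u_i, o_i z_i)·o_i z_i where B(x,u,ζ) = 1(π(x+ζ)/π(x) ≥ u). Then for every 0 ≤ i < K, B(x_0, u_i, o_i z_i) = B(x_i, u_i, o_i z_i); i.e., the accept/reject decision at step i computed from the initial point x_0 coincides with the one computed from the current state x_i. -/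
/-!
Moving from `y` to `y + v` multiplies the Gaussian density by
`exp (-(‖v‖² + 2⟪y - μ, v⟫) / (2σ²))`, so the acceptance decision for the proposal `v` depends
on `y` only through `⟪y, v⟫`. Along the scan, the moves before step `i` are multiples of `o j` with
`j < i`, orthogonal to `o i`, so `⟪x i, o i⟫ = ⟪x 0, o i⟫`.
-/

open RealInnerProductSpace

section

variable {E : Type*} [NormedAddCommGroup E] [InnerProductSpace ℝ E]

theorem exp_neg_norm_add_sub_sq_div (μ y v : E) (σ : ℝ) :
    Real.exp (-‖y + v - μ‖ ^ 2 / (2 * σ ^ 2))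
      = Real.exp (-(‖v‖ ^ 2 + 2 * ⟪y - μ, v⟫) / (2 * σ ^ 2))
        * Real.exp (-‖y - μ‖ ^ 2 / (2 * σ ^ 2)) := by
  rw [← Real.exp_add, add_sub_right_comm, norm_add_sq_real]
  ring_nf

theorem gaussian_accept_iff {π : E → ℝ} {μ : E} {σ : ℝ}
    (hπ : ∀ x, π x = Real.exp (-‖x - μ‖ ^ 2 / (2 * σ ^ 2))) (y v : E) (u : ℝ) :
    π (y + v) ≥ u * π y ↔ u ≤ Real.exp (-(‖v‖ ^ 2 + 2 * ⟪y - μ, v⟫) / (2 * σ ^ 2)) := by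
  rw [ge_iff_le, hπ, hπ, exp_neg_norm_add_sub_sq_div,
    mul_le_mul_iff_of_pos_right (Real.exp_pos _)]

theorem gaussian_accept_congr {π : E → ℝ} {μ : E} {σ : ℝ}
    (hπ : ∀ x, π x = Real.exp (-‖x - μ‖ ^ 2 / (2 * σ ^ 2))) {y y' v : E} (h : ⟪y, v⟫ = ⟪y', v⟫)
    (u : ℝ) : π (y + v) ≥ u * π y ↔ π (y' + v) ≥ u * π y' := by
  simp only [gaussian_accept_iff hπ, inner_sub_left, h]

theorem inner_eq_inner_zero_of_inner_sub_eq_zero {x : ℕ → E} {w : E} {n : ℕ}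
    (h : ∀ j < n, ⟪x (j + 1) - x j, w⟫ = 0) : ⟪x n, w⟫ = ⟪x 0, w⟫ := by
  induction n with
  | zero => rfl
  | succ n ih =>
    rw [← ih fun j hj => h j (hj.trans n.lt_succ_self), ← sub_eq_zero, ← inner_sub_left]
    exact h n n.lt_succ_self

end

theorem mwg_isotropic_gaussian_instant_fixed_point_general
    (d K : ℕ) (hK : K ≤ d) (μ : EuclideanSpace ℝ (Fin d)) (σ : ℝ)
    (π : EuclideanSpace ℝ (Fin d) → ℝ)
    (hπ : ∀ x, π x = Real.exp (-‖x - μ‖ ^ 2 / (2 * σ ^ 2)))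
    (o : ℕ → EuclideanSpace ℝ (Fin d))
    (ho : Orthonormal ℝ (fun i : Fin d => o i))
    (z : ℕ → ℝ) (u : ℕ → ℝ)
    (x : ℕ → EuclideanSpace ℝ (Fin d))
    (hrec : ∀ i < K,
      x (i + 1) = x i + (if π (x i + z i • o i) ≥ u i * π (x i) then z i • o i else 0)) :
    ∀ i < K, (π (x 0 + z i • o i) ≥ u i * π (x 0) ↔ π (x i + z i • o i) ≥ u i * π (x i)) := by
  intro i hi
  have horth : ∀ j < i, ⟪o j, o i⟫ = 0 := fun j hj =>
    ho.2 (i := ⟨j, by omega⟩) (j := ⟨i, by omega⟩) (by simp only [ne_eq, Fin.mk.injEq]; omega)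
  refine gaussian_accept_congr hπ (inner_eq_inner_zero_of_inner_sub_eq_zero fun j hj => ?_).symm _
  rw [hrec j (hj.trans hi), add_sub_cancel_left]
  split_ifs
  · rw [inner_smul_left, inner_smul_right, horth j hj, mul_zero, mul_zero]
  · exact inner_zero_left _

/-- For a deterministic-scan Metropolis-within-Gibbs chain targeting the
isotropic Gaussian density `π(x) ∝ exp(−‖x − μ‖²/(2σ²))` on `ℝ^d`, updating along an orthonormal
family `o 0, …, o (K-1)` (`K ≤ d`), the accept/reject decision at each step `i < K` computed from
the initial point `x 0` coincides with the one computed from the current state `x i`. -/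
theorem mwg_isotropic_gaussian_instant_fixed_point
    (d K : ℕ) (hK : K ≤ d) (μ : EuclideanSpace ℝ (Fin d)) (σ : ℝ) (hσ : 0 < σ)
    (π : EuclideanSpace ℝ (Fin d) → ℝ)
    (hπ : ∀ x, π x = Real.exp (-‖x - μ‖ ^ 2 / (2 * σ ^ 2)))
    (o : ℕ → EuclideanSpace ℝ (Fin d))
    (ho : Orthonormal ℝ (fun i : Fin d => o i))
    (z : ℕ → ℝ) (u : ℕ → ℝ) (hu : ∀ i, u i ∈ Set.Icc (0 : ℝ) 1)
    (x : ℕ → EuclideanSpace ℝ (Fin d))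
    (hrec : ∀ i < K,
      x (i + 1) = x i + (if π (x i + z i • o i) ≥ u i * π (x i) then z i • o i else 0)) :
    ∀ i < K, (π (x 0 + z i • o i) ≥ u i * π (x 0) ↔ π (x i + z i • o i) ≥ u i * π (x i)) :=
  mwg_isotropic_gaussian_instant_fixed_point_general d K hK μ σ π hπ o ho z u x hrec
end
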